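/- Define φ*(G,π₀) = max over leaves ν of 𝒯(G,π₀) of φ(G,π₀,ν), let ν* be any leaf attaining the maximum, and set C(G,π₀) = (G,π₀)^{R(G,π₀,ν*)}. Then C is well-defined (independent of the choice of ν*) and is a canonical form: C(G,π₀) ≅ (G,π₀) and C(G^g,π₀^g) = C(G,π₀) for all g ∈ S_n. -/

import Mathlib

/-- Relabelling action of a permutation on a graph: `v^g` adjacent to `w^g` iff `v` adjacent `w`. -/
def gactG {n : ℕ} (g : Equiv.Perm (Fin n)) (G : SimpleGraph (Fin n)) : SimpleGraph (Fin n) where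
  Adj v w := G.Adj (g⁻¹ v) (g⁻¹ w)
  symm := ⟨fun _ _ h => G.adj_symm h⟩
  loopless := ⟨fun _ h => G.irrefl h⟩

/-- Relabelling action of a permutation on a colouring. -/
def gactC {n : ℕ} (g : Equiv.Perm (Fin n)) (π : Fin n → ℕ) : Fin n → ℕ :=
  fun v => π (g⁻¹ v)

/-- A colouring of `V`: a function surjective onto `{1,…,k}` for some `k`. -/
def IsCol {n : ℕ} (π : Fin n → ℕ) : Prop := ∃ k, Set.range π = Set.Icc 1 k

/-- `π'` is finer than or equal to `π`. -/
def FinerC {n : ℕ} (π' π : Fin n → ℕ) : Prop := ∀ v w, π v < π w → π' v < π' w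

/-- Nodes of the search tree with child rule given by the target cells `Tc`. -/
inductive IsTNode {n : ℕ} (Tc : List (Fin n) → Set (Fin n)) : List (Fin n) → Prop
  | root : IsTNode Tc []
  | child {ν : List (Fin n)} {w : Fin n} :
      IsTNode Tc ν → w ∈ Tc ν → IsTNode Tc (ν ++ [w])

/-- The labelled graph `G^π` for a (discrete) colouring `π`, as a set of labelled edges. -/
def relabelSet {n : ℕ} (G : SimpleGraph (Fin n)) (π : Fin n → ℕ) : Set (ℕ × ℕ) :=
  {p | ∃ v w, G.Adj v w ∧ π v = p.1 ∧ π w = p.2}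

/-- Equitable colouring: same-coloured vertices have equally many neighbours of each colour. -/
def IsEquit {n : ℕ} (G : SimpleGraph (Fin n)) (π : Fin n → ℕ) : Prop :=
  ∀ v w, π v = π w → ∀ j,
    {u | G.Adj v u ∧ π u = j}.ncard = {u | G.Adj w u ∧ π u = j}.ncard

/-- `ν` is a leaf of `𝒯(G,π₀)` attaining the maximum value of the invariant `φ`. -/
def MaxLeaf {n : ℕ} {Ω : Type*} [LinearOrder Ω]
    (R : SimpleGraph (Fin n) → (Fin n → ℕ) → List (Fin n) → (Fin n → ℕ))
    (T : SimpleGraph (Fin n) → (Fin n → ℕ) → List (Fin n) → Set (Fin n))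
    (φ : SimpleGraph (Fin n) → (Fin n → ℕ) → List (Fin n) → Ω)
    (G : SimpleGraph (Fin n)) (π₀ : Fin n → ℕ) (ν : List (Fin n)) : Prop :=
  IsTNode (T G π₀) ν ∧ Function.Injective (R G π₀ ν) ∧
    ∀ μ, IsTNode (T G π₀) μ → Function.Injective (R G π₀ μ) → φ G π₀ μ ≤ φ G π₀ ν

/-!
Two φ-maximal leaves have the same φ-value, so by (φ2) they relabel `G` to the same graph. Both
discrete colourings refine `π₀`, so they relabel `π₀` to a monotone colouring; two monotone
rearrangements of the same colouring are equal, hence so are the relabelled colourings.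
For invariance, the tree, the refinement and `φ` are equivariant, so `g` maps φ-maximal leaves of
`𝒯(G,π₀)` to φ-maximal leaves of `𝒯(G^g,π₀^g)`, and well-definedness there finishes the proof.
-/

section Action

variable {n : ℕ}

lemma gactG_gactG (g h : Equiv.Perm (Fin n)) (G : SimpleGraph (Fin n)) :
    gactG g (gactG h G) = gactG (g * h) G := by
  ext v w; simp [gactG, mul_inv_rev]

lemma gactC_gactC (g h : Equiv.Perm (Fin n)) (π : Fin n → ℕ) :
    gactC g (gactC h π) = gactC (g * h) π := by
  funext v; simp [gactC, mul_inv_rev]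

lemma gactG_inv_gactG (g : Equiv.Perm (Fin n)) (G : SimpleGraph (Fin n)) :
    gactG g⁻¹ (gactG g G) = G := by
  ext v w; simp [gactG]

lemma gactC_inv_gactC (g : Equiv.Perm (Fin n)) (π : Fin n → ℕ) :
    gactC g⁻¹ (gactC g π) = π := by
  funext v; simp [gactC]

end Action

section DiscreteColouring

variable {n : ℕ} {G : SimpleGraph (Fin n)} {π π' π₀ : Fin n → ℕ} {σ σ' : Equiv.Perm (Fin n)}

lemma gactG_adj_iff_mem_relabelSet (hσ : ∀ v, π v = (σ v : ℕ) + 1) (a b : Fin n) :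
    (gactG σ G).Adj a b ↔ ((a : ℕ) + 1, (b : ℕ) + 1) ∈ relabelSet G π := by
  constructor
  · intro h
    exact ⟨σ⁻¹ a, σ⁻¹ b, h, by simp [hσ], by simp [hσ]⟩
  · rintro ⟨v, w, hvw, hv, hw⟩
    obtain rfl : σ v = a := Fin.ext (by simpa [hσ] using hv)
    obtain rfl : σ w = b := Fin.ext (by simpa [hσ] using hw)
    simpa [gactG] using hvw

lemma gactG_eq_of_relabelSet_eq (hσ : ∀ v, π v = (σ v : ℕ) + 1)
    (hσ' : ∀ v, π' v = (σ' v : ℕ) + 1) (h : relabelSet G π = relabelSet G π') :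
    gactG σ G = gactG σ' G := by
  ext a b
  rw [gactG_adj_iff_mem_relabelSet hσ, gactG_adj_iff_mem_relabelSet hσ', h]

lemma monotone_gactC_of_finerC (hπ : FinerC π π₀) (hσ : ∀ v, π v = (σ v : ℕ) + 1) :
    Monotone (gactC σ π₀) := by
  intro a b hab
  by_contra! hlt
  have := hπ (σ⁻¹ b) (σ⁻¹ a) hlt
  simp only [hσ, Equiv.Perm.coe_inv, Equiv.apply_symm_apply] at this
  omega

lemma gactC_eq_of_finerC (hπ : FinerC π π₀) (hπ' : FinerC π' π₀)
    (hσ : ∀ v, π v = (σ v : ℕ) + 1) (hσ' : ∀ v, π' v = (σ' v : ℕ) + 1) :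
    gactC σ π₀ = gactC σ' π₀ :=
  Tuple.unique_monotone (monotone_gactC_of_finerC hπ hσ) (monotone_gactC_of_finerC hπ' hσ')

end DiscreteColouring

section SearchTree

variable {n : ℕ} {Ω : Type*} [LinearOrder Ω]
  {R : SimpleGraph (Fin n) → (Fin n → ℕ) → List (Fin n) → (Fin n → ℕ)}
  {T : SimpleGraph (Fin n) → (Fin n → ℕ) → List (Fin n) → Set (Fin n)}
  {φ : SimpleGraph (Fin n) → (Fin n → ℕ) → List (Fin n) → Ω}
  {G : SimpleGraph (Fin n)} {π π₀ : Fin n → ℕ} {ν ν' : List (Fin n)} {σ σ' : Equiv.Perm (Fin n)}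

lemma IsTNode.map (hT3 : ∀ G π ν (g : Equiv.Perm (Fin n)),
      T (gactG g G) (gactC g π) (ν.map g) = g '' (T G π ν))
    (g : Equiv.Perm (Fin n)) (h : IsTNode (T G π) ν) :
    IsTNode (T (gactG g G) (gactC g π)) (ν.map g) := by
  induction h with
  | root => exact IsTNode.root
  | child _ hw ih =>
      rw [List.map_append]
      exact IsTNode.child ih (by rw [hT3]; exact Set.mem_image_of_mem g hw)

lemma isTNode_map_iff (hT3 : ∀ G π ν (g : Equiv.Perm (Fin n)),
      T (gactG g G) (gactC g π) (ν.map g) = g '' (T G π ν))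
    (g : Equiv.Perm (Fin n)) :
    IsTNode (T (gactG g G) (gactC g π)) (ν.map g) ↔ IsTNode (T G π) ν := by
  refine ⟨fun h => ?_, IsTNode.map hT3 g⟩
  simpa [gactG_inv_gactG, gactC_inv_gactC, List.map_map, Function.comp_def] using
    h.map hT3 g⁻¹

lemma injective_R_map_iff (hR3 : ∀ G π ν (g : Equiv.Perm (Fin n)),
      R (gactG g G) (gactC g π) (ν.map g) = gactC g (R G π ν))
    (g : Equiv.Perm (Fin n)) :
    Function.Injective (R (gactG g G) (gactC g π) (ν.map g)) ↔
      Function.Injective (R G π ν) := by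
  rw [hR3]
  exact Equiv.injective_comp g⁻¹ (R G π ν)

lemma MaxLeaf.map
    (hR3 : ∀ G π ν (g : Equiv.Perm (Fin n)),
      R (gactG g G) (gactC g π) (ν.map g) = gactC g (R G π ν))
    (hT3 : ∀ G π ν (g : Equiv.Perm (Fin n)),
      T (gactG g G) (gactC g π) (ν.map g) = g '' (T G π ν))
    (hφ3 : ∀ (G : SimpleGraph (Fin n)) (π₀ : Fin n → ℕ) (ν : List (Fin n))
      (g : Equiv.Perm (Fin n)), φ (gactG g G) (gactC g π₀) (ν.map g) = φ G π₀ ν)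
    (g : Equiv.Perm (Fin n)) (hν : MaxLeaf R T φ G π ν) :
    MaxLeaf R T φ (gactG g G) (gactC g π) (ν.map g) := by
  obtain ⟨hnode, hinj, hmax⟩ := hν
  refine ⟨hnode.map hT3 g, (injective_R_map_iff hR3 g).2 hinj, fun μ hμ hμinj => ?_⟩
  obtain ⟨μ, rfl⟩ := List.map_surjective_iff.2 g.surjective μ
  rw [hφ3, hφ3]
  exact hmax μ ((isTNode_map_iff hT3 g).1 hμ) ((injective_R_map_iff hR3 g).1 hμinj)

lemma MaxLeaf.phi_eq (hν : MaxLeaf R T φ G π ν) (hν' : MaxLeaf R T φ G π ν') :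
    φ G π ν = φ G π ν' :=
  le_antisymm (hν'.2.2 ν hν.1 hν.2.1) (hν.2.2 ν' hν'.1 hν'.2.1)

lemma MaxLeaf.canonical_form_eq (hR1 : ∀ ν, FinerC (R G π₀ ν) π₀)
    (hφ2 : ∀ ν ν', IsTNode (T G π₀) ν → IsTNode (T G π₀) ν' →
      Function.Injective (R G π₀ ν) → Function.Injective (R G π₀ ν') →
      (φ G π₀ ν = φ G π₀ ν' ↔ relabelSet G (R G π₀ ν) = relabelSet G (R G π₀ ν')))
    (hν : MaxLeaf R T φ G π₀ ν) (hν' : MaxLeaf R T φ G π₀ ν')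
    (hσ : ∀ v, R G π₀ ν v = (σ v : ℕ) + 1) (hσ' : ∀ v, R G π₀ ν' v = (σ' v : ℕ) + 1) :
    (gactG σ G, gactC σ π₀) = (gactG σ' G, gactC σ' π₀) := by
  have hrel := (hφ2 ν ν' hν.1 hν'.1 hν.2.1 hν'.2.1).1 (hν.phi_eq hν')
  rw [gactG_eq_of_relabelSet_eq hσ hσ' hrel, gactC_eq_of_finerC (hR1 ν) (hR1 ν') hσ hσ']

end SearchTree

theorem stmt12_general {n : ℕ} {Ω : Type*} [LinearOrder Ω]
    (R : SimpleGraph (Fin n) → (Fin n → ℕ) → List (Fin n) → (Fin n → ℕ))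
    (T : SimpleGraph (Fin n) → (Fin n → ℕ) → List (Fin n) → Set (Fin n))
    (hR1 : ∀ G π ν, FinerC (R G π ν) π)
    (hR3 : ∀ G π ν (g : Equiv.Perm (Fin n)),
      R (gactG g G) (gactC g π) (ν.map g) = gactC g (R G π ν))
    (hT3 : ∀ G π ν (g : Equiv.Perm (Fin n)),
      T (gactG g G) (gactC g π) (ν.map g) = g '' (T G π ν))
    (φ : SimpleGraph (Fin n) → (Fin n → ℕ) → List (Fin n) → Ω)
    (hφ2 : ∀ (G : SimpleGraph (Fin n)) (π₀ : Fin n → ℕ) (ν ν' : List (Fin n)),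
      IsTNode (T G π₀) ν → IsTNode (T G π₀) ν' →
      Function.Injective (R G π₀ ν) → Function.Injective (R G π₀ ν') →
      (φ G π₀ ν = φ G π₀ ν' ↔ relabelSet G (R G π₀ ν) = relabelSet G (R G π₀ ν')))
    (hφ3 : ∀ (G : SimpleGraph (Fin n)) (π₀ : Fin n → ℕ) (ν : List (Fin n))
      (g : Equiv.Perm (Fin n)), φ (gactG g G) (gactC g π₀) (ν.map g) = φ G π₀ ν)
    (G : SimpleGraph (Fin n)) (π₀ : Fin n → ℕ) :
    -- well-definedness: any two φ-maximal leaves give the same canonical form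
    (∀ (ν ν' : List (Fin n)) (σ σ' : Equiv.Perm (Fin n)),
      MaxLeaf R T φ G π₀ ν → MaxLeaf R T φ G π₀ ν' →
      (∀ v, R G π₀ ν v = (σ v : ℕ) + 1) → (∀ v, R G π₀ ν' v = (σ' v : ℕ) + 1) →
      (gactG σ G, gactC σ π₀) = (gactG σ' G, gactC σ' π₀)) ∧
    -- (C1): C(G,π₀) ≅ (G,π₀)
    (∀ (ν : List (Fin n)) (σ : Equiv.Perm (Fin n)),
      MaxLeaf R T φ G π₀ ν → (∀ v, R G π₀ ν v = (σ v : ℕ) + 1) →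
      ∃ g : Equiv.Perm (Fin n),
        (gactG g G, gactC g π₀) = (gactG σ G, gactC σ π₀)) ∧
    -- (C2): C(G^g,π₀^g) = C(G,π₀)
    (∀ (g : Equiv.Perm (Fin n)) (ν μ : List (Fin n)) (σ τ : Equiv.Perm (Fin n)),
      MaxLeaf R T φ G π₀ ν → (∀ v, R G π₀ ν v = (σ v : ℕ) + 1) →
      MaxLeaf R T φ (gactG g G) (gactC g π₀) μ →
      (∀ v, R (gactG g G) (gactC g π₀) μ v = (τ v : ℕ) + 1) →
      (gactG τ (gactG g G), gactC τ (gactC g π₀)) = (gactG σ G, gactC σ π₀)) := by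
  refine ⟨fun ν ν' σ σ' => MaxLeaf.canonical_form_eq (hR1 G π₀) (hφ2 G π₀),
    fun ν σ _ _ => ⟨σ, rfl⟩, ?_⟩
  intro g ν μ σ τ hν hσ hμ hτ
  have hνg : ∀ v, R (gactG g G) (gactC g π₀) (ν.map g) v = ((σ * g⁻¹) v : ℕ) + 1 := by
    simp [hR3, gactC, hσ]
  rw [MaxLeaf.canonical_form_eq (hR1 _ _) (hφ2 _ _) hμ (hν.map hR3 hT3 hφ3 g) hτ hνg,
    gactG_gactG, gactC_gactC, inv_mul_cancel_right]

/-- C(G,π₀) := (G,π₀)^{R(G,π₀,ν*)} for a φ-maximal leaf ν* is well defined and is a canonical form. -/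
theorem stmt12 {n : ℕ} {Ω : Type*} [LinearOrder Ω]
    (R : SimpleGraph (Fin n) → (Fin n → ℕ) → List (Fin n) → (Fin n → ℕ))
    (T : SimpleGraph (Fin n) → (Fin n → ℕ) → List (Fin n) → Set (Fin n))
    (hR1 : ∀ G π ν, FinerC (R G π ν) π)
    (hR2 : ∀ G π ν, ∀ v ∈ ν, (R G π ν) ⁻¹' {R G π ν v} = {v})
    (hR3 : ∀ G π ν (g : Equiv.Perm (Fin n)),
      R (gactG g G) (gactC g π) (ν.map g) = gactC g (R G π ν))
    (hT1 : ∀ G π ν, Function.Injective (R G π ν) → T G π ν = ∅)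
    (hT2 : ∀ G π ν, ¬ Function.Injective (R G π ν) →
      ∃ j, T G π ν = (R G π ν) ⁻¹' {j} ∧ ∃ v w, v ∈ T G π ν ∧ w ∈ T G π ν ∧ v ≠ w)
    (hT3 : ∀ G π ν (g : Equiv.Perm (Fin n)),
      T (gactG g G) (gactC g π) (ν.map g) = g '' (T G π ν))
    (φ : SimpleGraph (Fin n) → (Fin n → ℕ) → List (Fin n) → Ω)
    (hφ1 : ∀ (G : SimpleGraph (Fin n)) (π₀ : Fin n → ℕ) (ν ν' : List (Fin n)),
      IsTNode (T G π₀) ν → IsTNode (T G π₀) ν' → ν ≠ ν' → ν.length = ν'.length →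
      φ G π₀ ν < φ G π₀ ν' →
      ∀ ν₁ ν₁', IsTNode (T G π₀) ν₁ → ν <+: ν₁ → Function.Injective (R G π₀ ν₁) →
        IsTNode (T G π₀) ν₁' → ν' <+: ν₁' → Function.Injective (R G π₀ ν₁') →
        φ G π₀ ν₁ < φ G π₀ ν₁')
    (hφ2 : ∀ (G : SimpleGraph (Fin n)) (π₀ : Fin n → ℕ) (ν ν' : List (Fin n)),
      IsTNode (T G π₀) ν → IsTNode (T G π₀) ν' →
      Function.Injective (R G π₀ ν) → Function.Injective (R G π₀ ν') →
      (φ G π₀ ν = φ G π₀ ν' ↔ relabelSet G (R G π₀ ν) = relabelSet G (R G π₀ ν')))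
    (hφ3 : ∀ (G : SimpleGraph (Fin n)) (π₀ : Fin n → ℕ) (ν : List (Fin n))
      (g : Equiv.Perm (Fin n)), φ (gactG g G) (gactC g π₀) (ν.map g) = φ G π₀ ν)
    (hRcol : ∀ G π ν, IsCol (R G π ν))
    (G : SimpleGraph (Fin n)) (π₀ : Fin n → ℕ) (hπ₀ : IsCol π₀) :
    -- well-definedness: any two φ-maximal leaves give the same canonical form
    (∀ (ν ν' : List (Fin n)) (σ σ' : Equiv.Perm (Fin n)),
      MaxLeaf R T φ G π₀ ν → MaxLeaf R T φ G π₀ ν' →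
      (∀ v, R G π₀ ν v = (σ v : ℕ) + 1) → (∀ v, R G π₀ ν' v = (σ' v : ℕ) + 1) →
      (gactG σ G, gactC σ π₀) = (gactG σ' G, gactC σ' π₀)) ∧
    -- (C1): C(G,π₀) ≅ (G,π₀)
    (∀ (ν : List (Fin n)) (σ : Equiv.Perm (Fin n)),
      MaxLeaf R T φ G π₀ ν → (∀ v, R G π₀ ν v = (σ v : ℕ) + 1) →
      ∃ g : Equiv.Perm (Fin n),
        (gactG g G, gactC g π₀) = (gactG σ G, gactC σ π₀)) ∧
    -- (C2): C(G^g,π₀^g) = C(G,π₀)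
    (∀ (g : Equiv.Perm (Fin n)) (ν μ : List (Fin n)) (σ τ : Equiv.Perm (Fin n)),
      MaxLeaf R T φ G π₀ ν → (∀ v, R G π₀ ν v = (σ v : ℕ) + 1) →
      MaxLeaf R T φ (gactG g G) (gactC g π₀) μ →
      (∀ v, R (gactG g G) (gactC g π₀) μ v = (τ v : ℕ) + 1) →
      (gactG τ (gactG g G), gactC τ (gactC g π₀)) = (gactG σ G, gactC σ π₀)) :=
  stmt12_general R T hR1 hR3 hT3 φ hφ2 hφ3 G π₀
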